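/- arXiv:2410.23398 — 6 statements merged into one kernel-verified Lean document; each statement's English description precedes it below -/
import Mathlib

section
/- The negative entropy φ(x) = Σᵢ x[i] ln x[i] is 1-strongly convex on the probability simplex Δⁿ with respect to the ℓ₁ norm; equivalently, for all x in the relative interior of Δⁿ and all z ∈ ℝⁿ, Σᵢ z[i]²/x[i] ≥ (Σᵢ |z[i]|)². -/
/-- The negative entropy is 1-strongly convex on the probability simplex with
respect to the ℓ₁ norm; equivalently (Hessian form), for every `x` in the relative interior of
the simplex and every `z ∈ ℝⁿ`, `∑ i, z i ^ 2 / x i ≥ (∑ i, |z i|) ^ 2`. -/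
theorem stmt3 (n : ℕ) (x z : Fin n → ℝ) (hx0 : ∀ i, 0 < x i) (hx1 : (∑ i, x i) = 1) :
    (∑ i, |z i|) ^ 2 ≤ ∑ i, z i ^ 2 / x i := by
  have h := Finset.sq_sum_div_le_sum_sq_div (Finset.univ) (fun i => |z i|)
    (g := x) (fun i _ => hx0 i)
  simpa [hx1, sq_abs] using h
end

section
/- Online mirror descent regret bound: Let Q ⊆ ℝᵈ be compact convex, φ : Q → ℝ a μ-strongly convex DGF with respect to a norm ‖·‖, and η > 0. Given reward vectors w₁,…,w_T, predictions m₁,…,m_T, iterates x_t = Π_φ(η m_t, x̃_t), x̃_{t+1} = Π_φ(η w_t, x̃_t) with x̃₁ = argmin_{x∈Q} φ(x). Then for every x* ∈ Q, Σ_{t=1}^T ⟨x* − x_t, w_t⟩ ≤ D_φ(x*, x̃₁)/η + (η/(2μ)) Σ_{t=1}^T ‖w_t − m_t‖_*². -/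
/-!
In round `t`, the first-order optimality conditions of the two proximal steps, combined with the
three-point identity `D(z,y) - D(z,x) - D(x,y) = ⟪∇φ x - ∇φ y, z - x⟫`, give
`η⟪x* - x_t, w_t⟫ ≤ D(x*, x̃_t) - D(x*, x̃_{t+1}) - D(x̃_{t+1}, x_t) - D(x_t, x̃_t)
  + η⟪w_t - m_t, x̃_{t+1} - x_t⟫`.
By duality and Young's inequality the last term is at most
`η²/(2μ) ‖w_t - m_t‖_*² + μ/2 ‖x̃_{t+1} - x_t‖²`, and strong convexity bounds
`μ/2 ‖x̃_{t+1} - x_t‖²` by `D(x̃_{t+1}, x_t)`. Summing, the divergences to `x*` telescope.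
-/

open RealInnerProductSpace Set

theorem Seminorm.exists_pos_mul_norm_le {E : Type*} [NormedAddCommGroup E] [NormedSpace ℝ E]
    [FiniteDimensional ℝ E] (p : Seminorm ℝ E) (hp : ∀ v, p v = 0 → v = 0) :
    ∃ c > 0, ∀ v, c * ‖v‖ ≤ p v := by
  rcases subsingleton_or_nontrivial E with hE | hE
  · exact ⟨1, one_pos, fun v => by simp [Subsingleton.elim v 0]⟩
  obtain ⟨v₀, hv₀, hmin⟩ := (isCompact_sphere (0 : E) 1).exists_isMinOn
    (NormedSpace.sphere_nonempty.mpr zero_le_one)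
    p.convexOn.locallyLipschitz.continuous.continuousOn
  have hv₀_ne : v₀ ≠ 0 := ne_zero_of_mem_unit_sphere ⟨v₀, hv₀⟩
  refine ⟨p v₀, (apply_nonneg p v₀).lt_of_ne (fun h => hv₀_ne (hp v₀ h.symm)), fun v => ?_⟩
  rcases eq_or_ne v 0 with rfl | hv
  · simp
  have hnv : 0 < ‖v‖ := norm_pos_iff.mpr hv
  have hle : p v₀ ≤ p (‖v‖⁻¹ • v) := hmin (by simp [norm_smul, hnv.ne'])
  rw [map_smul_eq_mul, norm_inv, norm_norm] at hle
  rwa [le_inv_mul_iff₀ hnv, mul_comm] at hle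

section DualNorm

variable {E : Type*} [NormedAddCommGroup E] [InnerProductSpace ℝ E] [FiniteDimensional ℝ E]

noncomputable def dualNorm (p : Seminorm ℝ E) (u : E) : ℝ :=
  sSup {r : ℝ | ∃ v, p v ≤ 1 ∧ r = ⟪u, v⟫}

/-- Finite dimension makes `{v | p v ≤ 1}` bounded, so `dualNorm p u` is not the junk `sSup`. -/
theorem real_inner_le_dualNorm_mul (p : Seminorm ℝ E) (hp : ∀ v, p v = 0 → v = 0) (u v : E) :
    ⟪u, v⟫ ≤ dualNorm p u * p v := by
  obtain ⟨c, hc, hlb⟩ := p.exists_pos_mul_norm_le hp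
  have hbdd : BddAbove {r : ℝ | ∃ v, p v ≤ 1 ∧ r = ⟪u, v⟫} := by
    refine ⟨‖u‖ / c, ?_⟩
    rintro _ ⟨v', hv', rfl⟩
    have h1 : ‖v'‖ ≤ 1 / c := by
      rw [le_div_iff₀ hc, mul_comm]
      exact (hlb v').trans hv'
    calc ⟪u, v'⟫ ≤ ‖u‖ * ‖v'‖ := real_inner_le_norm u v'
      _ ≤ ‖u‖ * (1 / c) := by gcongr
      _ = ‖u‖ / c := by ring
  rcases eq_or_ne v 0 with rfl | hv
  · simp
  have hpv : 0 < p v := (apply_nonneg p v).lt_of_ne (fun h => hv (hp v h.symm))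
  have hmem : ⟪u, (p v)⁻¹ • v⟫ ≤ dualNorm p u :=
    le_csSup hbdd ⟨(p v)⁻¹ • v, by simp [map_smul_eq_mul, abs_of_pos hpv, hpv.ne'], rfl⟩
  rw [real_inner_smul_right, inv_mul_le_iff₀ hpv, mul_comm] at hmem
  exact hmem

end DualNorm

section Bregman

variable {E : Type*} [NormedAddCommGroup E] [InnerProductSpace ℝ E] {φ : E → ℝ} {gφ : E → E}

def bregmanDiv (φ : E → ℝ) (gφ : E → E) (a b : E) : ℝ :=
  φ a - φ b - ⟪gφ b, a - b⟫

theorem bregmanDiv_three_point (z x y : E) :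
    bregmanDiv φ gφ z y - bregmanDiv φ gφ z x - bregmanDiv φ gφ x y = ⟪gφ x - gφ y, z - x⟫ := by
  simp only [bregmanDiv, inner_sub_left, inner_sub_right]
  ring

variable [CompleteSpace E]

theorem le_bregmanDiv_of_le_sub_mul {a b : E} {c : ℝ} (hb : HasGradientAt φ (gφ b) b)
    (h : ∀ s ∈ Icc (0 : ℝ) 1,
      φ (s • a + (1 - s) • b) ≤ s * φ a + (1 - s) * φ b - c * (s * (1 - s))) :
    c ≤ bregmanDiv φ gφ a b := by
  set ψ : ℝ → ℝ := fun s => φ (b + s • (a - b)) - φ b - s * (φ a - φ b) + c * (s * (1 - s))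
  have hψ : HasDerivAt ψ (⟪gφ b, a - b⟫ - (φ a - φ b) + c) 0 := by
    have hline : HasDerivAt (fun s : ℝ => φ (b + s • (a - b))) ⟪gφ b, a - b⟫ 0 :=
      hb.hasFDerivAt.hasLineDerivAt (a - b)
    have hpoly : HasDerivAt (fun s : ℝ => s * (1 - s)) 1 0 := by
      simpa using (hasDerivAt_id' (0 : ℝ)).fun_mul ((hasDerivAt_id' (0 : ℝ)).const_sub 1)
    simpa using ((hline.sub_const (φ b)).fun_sub ((hasDerivAt_id' 0).mul_const (φ a - φ b))).fun_add
      (hpoly.const_mul c)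
  have hmax : IsMaxOn ψ (Icc 0 1) 0 := fun s hs => by
    have := h s hs
    simp only [ψ, mem_ofPred_eq, zero_smul, add_zero, zero_mul, mul_zero, sub_self]
    rw [show b + s • (a - b) = s • a + (1 - s) • b by module]
    linarith
  have := hmax.localize.hasFDerivWithinAt_nonpos hψ.hasFDerivAt.hasFDerivWithinAt
    (sub_mem_posTangentConeAt_of_segment_subset ((convex_Icc 0 1).segment_subset
      (left_mem_Icc.mpr zero_le_one) (right_mem_Icc.mpr zero_le_one)))
  rw [sub_zero, ContinuousLinearMap.toSpanSingleton_apply_one] at this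
  rw [bregmanDiv]
  linarith

theorem inner_sub_le_bregmanDiv_of_isMaxOn {Q : Set E} (hQ : Convex ℝ Q) {g y xm z : E}
    (hxm : xm ∈ Q) (hz : z ∈ Q) (hgrad : HasGradientAt φ (gφ xm) xm)
    (hmax : IsMaxOn (fun z => ⟪g, z⟫ - bregmanDiv φ gφ z y) Q xm) :
    ⟪g, z - xm⟫ ≤ bregmanDiv φ gφ z y - bregmanDiv φ gφ z xm - bregmanDiv φ gφ xm y := by
  have hF : HasFDerivAt (fun z => ⟪g, z⟫ - bregmanDiv φ gφ z y)
      (innerSL ℝ g + innerSL ℝ (gφ y) - InnerProductSpace.toDual ℝ E (gφ xm)) xm := by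
    have := (((innerSL ℝ g).hasFDerivAt.add (innerSL ℝ (gφ y)).hasFDerivAt).sub
      hgrad.hasFDerivAt).add_const (φ y - ⟪gφ y, y⟫)
    refine this.congr_of_eventuallyEq (Filter.Eventually.of_forall fun z => ?_)
    simp only [bregmanDiv, Pi.add_apply, Pi.sub_apply, innerSL_apply_apply, inner_sub_right]
    ring
  have hfermat := hmax.localize.hasFDerivWithinAt_nonpos hF.hasFDerivWithinAt
    (sub_mem_posTangentConeAt_of_segment_subset (hQ.segment_subset hxm hz))
  simp only [sub_apply, add_apply, innerSL_apply_apply,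
    InnerProductSpace.toDual_apply_apply] at hfermat
  rw [bregmanDiv_three_point, inner_sub_left]
  linarith

theorem half_mul_sq_le_bregmanDiv {Q : Set E} {N : E → ℝ} {μ : ℝ}
    (hφ : ∀ a ∈ Q, ∀ b ∈ Q, ∀ s : ℝ, 0 ≤ s → s ≤ 1 →
      φ (s • a + (1 - s) • b) ≤ s * φ a + (1 - s) * φ b - μ / 2 * (s * (1 - s)) * N (a - b) ^ 2)
    (hgφ : ∀ z ∈ Q, HasGradientAt φ (gφ z) z) {a b : E} (ha : a ∈ Q) (hb : b ∈ Q) :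
    μ / 2 * N (a - b) ^ 2 ≤ bregmanDiv φ gφ a b :=
  le_bregmanDiv_of_le_sub_mul (hgφ b hb) fun s hs =>
    (hφ a ha b hb s hs.1 hs.2).trans_eq (by ring)

end Bregman

section MirrorDescent

variable {E : Type*} [NormedAddCommGroup E] [InnerProductSpace ℝ E] [FiniteDimensional ℝ E]
  {Q : Set E} {μ : ℝ} {φ : E → ℝ} {gφ : E → E}

theorem mirrorDescent_step_le (hQ : Convex ℝ Q) (p : Seminorm ℝ E) (hp : ∀ v, p v = 0 → v = 0)
    (hμ : 0 < μ)
    (hφ : ∀ a ∈ Q, ∀ b ∈ Q, ∀ s : ℝ, 0 ≤ s → s ≤ 1 →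
      φ (s • a + (1 - s) • b) ≤ s * φ a + (1 - s) * φ b - μ / 2 * (s * (1 - s)) * p (a - b) ^ 2)
    (hgφ : ∀ z ∈ Q, HasGradientAt φ (gφ z) z) {η : ℝ} (hη : 0 ≤ η) {w m y x y' xstar : E}
    (hy : y ∈ Q) (hx : x ∈ Q) (hy' : y' ∈ Q) (hxstar : xstar ∈ Q)
    (hxmax : IsMaxOn (fun z => ⟪η • m, z⟫ - bregmanDiv φ gφ z y) Q x)
    (hy'max : IsMaxOn (fun z => ⟪η • w, z⟫ - bregmanDiv φ gφ z y) Q y') :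
    η * ⟪xstar - x, w⟫ ≤ bregmanDiv φ gφ xstar y - bregmanDiv φ gφ xstar y' +
      η ^ 2 / (2 * μ) * dualNorm p (w - m) ^ 2 := by
  have hw := inner_sub_le_bregmanDiv_of_isMaxOn hQ hy' hxstar (hgφ y' hy') hy'max
  have hm := inner_sub_le_bregmanDiv_of_isMaxOn hQ hx hy' (hgφ x hx) hxmax
  have hcross := half_mul_sq_le_bregmanDiv hφ hgφ hy' hx
  have hxy : 0 ≤ bregmanDiv φ gφ x y :=
    le_trans (by positivity) (half_mul_sq_le_bregmanDiv hφ hgφ hx hy)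
  have hdual := real_inner_le_dualNorm_mul p hp (w - m) (y' - x)
  have hyoung : η * (dualNorm p (w - m) * p (y' - x)) ≤
      η ^ 2 / (2 * μ) * dualNorm p (w - m) ^ 2 + μ / 2 * p (y' - x) ^ 2 := by
    field_simp
    nlinarith [sq_nonneg (η * dualNorm p (w - m) - μ * p (y' - x))]
  have hsplit : η * ⟪xstar - x, w⟫ =
      ⟪η • w, xstar - y'⟫ + ⟪η • m, y' - x⟫ + η * ⟪w - m, y' - x⟫ := by
    simp only [real_inner_smul_left, inner_sub_left, inner_sub_right, real_inner_comm w]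
    ring
  linarith [mul_le_mul_of_nonneg_left hdual hη]

end MirrorDescent

theorem Finset.sum_range_le_of_le_sub_add {a c D : ℕ → ℝ} {T : ℕ}
    (h : ∀ t < T, a t ≤ D t - D (t + 1) + c t) (hD : 0 ≤ D T) :
    ∑ t ∈ Finset.range T, a t ≤ D 0 + ∑ t ∈ Finset.range T, c t := by
  have := Finset.sum_le_sum fun t ht => h t (Finset.mem_range.mp ht)
  rw [Finset.sum_add_distrib, Finset.sum_range_sub' D T] at this
  linarith

theorem stmt7_general {d : ℕ} (T : ℕ)
    (Q : Set (EuclideanSpace ℝ (Fin d)))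
    (hQconv : Convex ℝ Q)
    (N : EuclideanSpace ℝ (Fin d) → ℝ)
    (hN0 : ∀ v, N v = 0 ↔ v = 0)
    (hNsmul : ∀ (a : ℝ) (v : EuclideanSpace ℝ (Fin d)), N (a • v) = |a| * N v)
    (hNtri : ∀ u v, N (u + v) ≤ N u + N v)
    (Nd : EuclideanSpace ℝ (Fin d) → ℝ)
    (hNd : ∀ u, Nd u = sSup {r : ℝ | ∃ v, N v ≤ 1 ∧ r = ⟪u, v⟫})
    (μ : ℝ) (hμ : 0 < μ)
    (φ : EuclideanSpace ℝ (Fin d) → ℝ)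
    (hφ : ∀ a ∈ Q, ∀ b ∈ Q, ∀ s : ℝ, 0 ≤ s → s ≤ 1 →
      φ (s • a + (1 - s) • b) ≤ s * φ a + (1 - s) * φ b - μ / 2 * (s * (1 - s)) * N (a - b) ^ 2)
    (gφ : EuclideanSpace ℝ (Fin d) → EuclideanSpace ℝ (Fin d))
    (hgφ : ∀ z ∈ Q, HasGradientAt φ (gφ z) z)
    (D : EuclideanSpace ℝ (Fin d) → EuclideanSpace ℝ (Fin d) → ℝ)
    (hD : ∀ a b, D a b = φ a - φ b - ⟪gφ b, a - b⟫)
    (η : ℝ) (hη : 0 < η)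
    (w m x xt : ℕ → EuclideanSpace ℝ (Fin d))
    (hxt0 : xt 0 ∈ Q ∧ ∀ z ∈ Q, φ (xt 0) ≤ φ z)
    (hx : ∀ t < T, x t ∈ Q ∧ ∀ z ∈ Q,
      ⟪η • m t, z⟫ - D z (xt t) ≤ ⟪η • m t, x t⟫ - D (x t) (xt t))
    (hxt : ∀ t < T, xt (t + 1) ∈ Q ∧ ∀ z ∈ Q,
      ⟪η • w t, z⟫ - D z (xt t) ≤ ⟪η • w t, xt (t + 1)⟫ - D (xt (t + 1)) (xt t)) :
    ∀ xstar ∈ Q, ∑ t ∈ Finset.range T, ⟪xstar - x t, w t⟫ ≤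
      D xstar (xt 0) / η + η / (2 * μ) * ∑ t ∈ Finset.range T, Nd (w t - m t) ^ 2 := by
  intro xstar hxstar
  let p : Seminorm ℝ (EuclideanSpace ℝ (Fin d)) :=
    Seminorm.of N hNtri fun a v => by rw [hNsmul, Real.norm_eq_abs]
  obtain rfl : D = bregmanDiv φ gφ := funext₂ hD
  obtain rfl : Nd = dualNorm p := funext hNd
  have hxtQ : ∀ t ≤ T, xt t ∈ Q
    | 0, _ => hxt0.1
    | t + 1, ht => (hxt t ht).1
  have hstep (t : ℕ) (ht : t < T) := mirrorDescent_step_le hQconv p (fun v => (hN0 v).mp) hμ hφ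
    hgφ hη.le (hxtQ t ht.le) (hx t ht).1 (hxt t ht).1 hxstar (isMaxOn_iff.mpr (hx t ht).2)
    (isMaxOn_iff.mpr (hxt t ht).2)
  have hsum := Finset.sum_range_le_of_le_sub_add hstep
    ((by positivity : (0 : ℝ) ≤ μ / 2 * N (xstar - xt T) ^ 2).trans
      (half_mul_sq_le_bregmanDiv hφ hgφ hxstar (hxtQ T le_rfl)))
  rw [← Finset.mul_sum, ← Finset.mul_sum] at hsum
  rw [div_add' _ _ _ hη.ne', le_div_iff₀ hη]
  linear_combination hsum

/-- Regret bound for (predictive) online mirror descent. Let `Q ⊆ ℝᵈ` be compact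
convex, `φ` a `μ`-strongly convex DGF with respect to a norm `N` (with dual norm `Nd`),
differentiable on `Q` with gradient `gφ`, and `η > 0`. Given rewards `w t`, predictions `m t`,
and iterates `x t = Π_φ(η • m t, xt t)`, `xt (t+1) = Π_φ(η • w t, xt t)` (expressed as
maximizers of the proximal objectives), with `xt 0 = argmin_{z ∈ Q} φ z`, every comparator
`x* ∈ Q` satisfies
`∑_{t<T} ⟪x* - x t, w t⟫ ≤ D(x*, xt 0)/η + (η/(2μ)) ∑_{t<T} Nd (w t - m t) ^ 2`,
where `D a b = φ a - φ b - ⟪gφ b, a - b⟫` is the Bregman divergence. -/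
theorem stmt7 {d : ℕ} (T : ℕ)
    (Q : Set (EuclideanSpace ℝ (Fin d)))
    (hQconv : Convex ℝ Q) (hQcomp : IsCompact Q) (hQne : Q.Nonempty)
    (N : EuclideanSpace ℝ (Fin d) → ℝ)
    (hN0 : ∀ v, N v = 0 ↔ v = 0)
    (hNsmul : ∀ (a : ℝ) (v : EuclideanSpace ℝ (Fin d)), N (a • v) = |a| * N v)
    (hNtri : ∀ u v, N (u + v) ≤ N u + N v)
    (Nd : EuclideanSpace ℝ (Fin d) → ℝ)
    (hNd : ∀ u, Nd u = sSup {r : ℝ | ∃ v, N v ≤ 1 ∧ r = ⟪u, v⟫})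
    (μ : ℝ) (hμ : 0 < μ)
    (φ : EuclideanSpace ℝ (Fin d) → ℝ)
    (hφ : ∀ a ∈ Q, ∀ b ∈ Q, ∀ s : ℝ, 0 ≤ s → s ≤ 1 →
      φ (s • a + (1 - s) • b) ≤ s * φ a + (1 - s) * φ b - μ / 2 * (s * (1 - s)) * N (a - b) ^ 2)
    (gφ : EuclideanSpace ℝ (Fin d) → EuclideanSpace ℝ (Fin d))
    (hgφ : ∀ z ∈ Q, HasGradientAt φ (gφ z) z)
    (D : EuclideanSpace ℝ (Fin d) → EuclideanSpace ℝ (Fin d) → ℝ)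
    (hD : ∀ a b, D a b = φ a - φ b - ⟪gφ b, a - b⟫)
    (η : ℝ) (hη : 0 < η)
    (w m x xt : ℕ → EuclideanSpace ℝ (Fin d))
    (hxt0 : xt 0 ∈ Q ∧ ∀ z ∈ Q, φ (xt 0) ≤ φ z)
    (hx : ∀ t < T, x t ∈ Q ∧ ∀ z ∈ Q,
      ⟪η • m t, z⟫ - D z (xt t) ≤ ⟪η • m t, x t⟫ - D (x t) (xt t))
    (hxt : ∀ t < T, xt (t + 1) ∈ Q ∧ ∀ z ∈ Q,
      ⟪η • w t, z⟫ - D z (xt t) ≤ ⟪η • w t, xt (t + 1)⟫ - D (xt (t + 1)) (xt t)) :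
    ∀ xstar ∈ Q, ∑ t ∈ Finset.range T, ⟪xstar - x t, w t⟫ ≤
      D xstar (xt 0) / η + η / (2 * μ) * ∑ t ∈ Finset.range T, Nd (w t - m t) ^ 2 :=
  stmt7_general T Q hQconv N hN0 hNsmul hNtri Nd hNd μ hμ φ hφ gφ hgφ D hD η hη w m x xt hxt0 hx hxt
end

section
/- In a TFSDP where every non-root non-terminal observation point has at least two children (|C_σ| ≥ 2 for all non-root σ ∈ Σ∖E), the tree size and leaf count satisfy ‖Q‖₁ ≤ 2·‖Q‖_⊥. More precisely, for every x ∈ Q and every non-root point h, Σ_{σ ∈ Σ_h} x[σ] ≤ x[h]·(2·w(h) − 1), where w(h) is the leaf count of the subtree at h. -/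
/-- A tree-form sequential decision process (TFSDP), modeled as a finite rooted tree whose
nodes are either decision points (`isDec = true`, the player picks one of the `k` actions) or
observation points (`isDec = false`, with `k` children; `k = 0` means a terminal). -/
inductive GTree : Type where
  | node (isDec : Bool) (k : ℕ) (children : Fin k → GTree) : GTree

namespace GTree

/-- The set of points (decision points and sequences) of the tree. -/
def Pts : GTree → Type
  | .node _ k c => Unit ⊕ ((i : Fin k) × Pts (c i))

/-- The root point of a tree. -/
def root : (t : GTree) → Pts t
  | .node _ _ _ => Sum.inl ()

def ptsFintype : (t : GTree) → Fintype (Pts t)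
  | .node _ k c =>
    haveI : ∀ i, Fintype (Pts (c i)) := fun i => ptsFintype (c i)
    inferInstanceAs (Fintype (Unit ⊕ ((i : Fin k) × Pts (c i))))

attribute [instance] ptsFintype

/-- `isLeaf t p` holds when `p` is a terminal observation point. -/
def isLeaf : (t : GTree) → Pts t → Bool
  | .node isDec k _, Sum.inl _ => !isDec && k == 0
  | .node _ _ c, Sum.inr ⟨i, p⟩ => isLeaf (c i) p

/-- Sequence-form flow constraints for strategies: at a decision point the value splits over the
actions, at an observation point each child keeps the value of its parent. -/
def flowQ : (t : GTree) → (Pts t → ℝ) → Prop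
  | .node true _ c, x =>
      (x (Sum.inl ()) = ∑ i, x (Sum.inr ⟨i, root (c i)⟩)) ∧
      ∀ i, flowQ (c i) (fun p => x (Sum.inr ⟨i, p⟩))
  | .node false _ c, x =>
      (∀ i, x (Sum.inr ⟨i, root (c i)⟩) = x (Sum.inl ())) ∧
      ∀ i, flowQ (c i) (fun p => x (Sum.inr ⟨i, p⟩))

/-- Flow constraints for transition kernels: at a decision point each child keeps the value of
its parent, at a non-terminal observation point the value splits over the children. -/
def flowY : (t : GTree) → (Pts t → ℝ) → Prop
  | .node true _ c, y =>
      (∀ i, y (Sum.inr ⟨i, root (c i)⟩) = y (Sum.inl ())) ∧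
      ∀ i, flowY (c i) (fun p => y (Sum.inr ⟨i, p⟩))
  | .node false k c, y =>
      (k ≠ 0 → y (Sum.inl ()) = ∑ i, y (Sum.inr ⟨i, root (c i)⟩)) ∧
      ∀ i, flowY (c i) (fun p => y (Sum.inr ⟨i, p⟩))

/-- The (extended) sequence-form strategy polytope `Q̂`. -/
def memQ (t : GTree) (x : Pts t → ℝ) : Prop :=
  flowQ t x ∧ x (root t) = 1 ∧ ∀ p, x p ∈ Set.Icc (0 : ℝ) 1

/-- The (extended) transition-kernel polytope `Ŷ`. -/
def memY (t : GTree) (y : Pts t → ℝ) : Prop :=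
  flowY t y ∧ y (root t) = 1 ∧ ∀ p, y p ∈ Set.Icc (0 : ℝ) 1

/-- Well-formedness: every decision point offers at least one action. -/
def wf : GTree → Prop
  | .node isDec k c => (isDec = true → 0 < k) ∧ ∀ i, wf (c i)

/-- The leaf count `w(h)`: 1 at terminals, max over actions at decision points, sum over
children at non-terminal observation points. -/
def leafCount : GTree → ℕ
  | .node true _ c => Finset.univ.sup fun i => leafCount (c i)
  | .node false 0 _ => 1
  | .node false (_ + 1) c => ∑ i, leafCount (c i)

/-- The tree size `‖Q‖₁`: maximum number of observation points reachable by a pure strategy. -/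
def treeSize : GTree → ℕ
  | .node true _ c => Finset.univ.sup fun i => treeSize (c i)
  | .node false _ c => 1 + ∑ i, treeSize (c i)

/-- The size of the largest action set. -/
def maxA : GTree → ℕ
  | .node true k c => max k (Finset.univ.sup fun i => maxA (c i))
  | .node false _ c => Finset.univ.sup fun i => maxA (c i)

/-- The type of reduced normal-form (pure) strategies: pick one action at each reachable
decision point. -/
def Strat : GTree → Type
  | .node true k c => (i : Fin k) × Strat (c i)
  | .node false k c => (i : Fin k) → Strat (c i)

/-- The sum of a vector over the terminal observation points. -/
noncomputable def leafSum (t : GTree) (u : Pts t → ℝ) : ℝ :=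
  ∑ p : Pts t, if isLeaf t p then u p else 0

/-- The sum of a vector over all observation points (sequences). -/
noncomputable def obsSum : (t : GTree) → (Pts t → ℝ) → ℝ
  | .node true _ c, x => ∑ i, obsSum (c i) (fun p => x (Sum.inr ⟨i, p⟩))
  | .node false _ c, x => x (Sum.inl ()) + ∑ i, obsSum (c i) (fun p => x (Sum.inr ⟨i, p⟩))

/-- No observation point has exactly one child. -/
def noSingle : GTree → Prop
  | .node isDec k c => (isDec = false → k ≠ 1) ∧ ∀ i, noSingle (c i)

/-- The `y`-weighted dilated entropy
`∑_{j ∈ J} ∑_{a ∈ A_j} y[ja] * x[ja] * ln (x[ja] / x[p_j])`. -/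
noncomputable def dilEnt : (t : GTree) → (Pts t → ℝ) → (Pts t → ℝ) → ℝ
  | .node true _ c, x, y =>
      ∑ i, (y (Sum.inr ⟨i, root (c i)⟩) * x (Sum.inr ⟨i, root (c i)⟩) *
              Real.log (x (Sum.inr ⟨i, root (c i)⟩) / x (Sum.inl ())) +
            dilEnt (c i) (fun p => x (Sum.inr ⟨i, p⟩)) (fun p => y (Sum.inr ⟨i, p⟩)))
  | .node false _ c, x, y =>
      ∑ i, dilEnt (c i) (fun p => x (Sum.inr ⟨i, p⟩)) (fun p => y (Sum.inr ⟨i, p⟩))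

end GTree

open GTree in
lemma stmt13_aux : ∀ t : GTree, noSingle t → ∀ x : Pts t → ℝ, flowQ t x → (∀ p, 0 ≤ x p) →
    obsSum t x ≤ x (root t) * (2 * (leafCount t : ℝ) - 1) := by
  intro t
  induction t with
  | node isDec k c ih =>
    intro hns x hf hx
    cases isDec with
    | true =>
      -- decision point
      simp only [flowQ] at hf
      simp only [obsSum, root, leafCount]
      have key : ∀ i : Fin k,
          obsSum (c i) (fun p => x (Sum.inr ⟨i, p⟩)) ≤
            x (Sum.inr ⟨i, root (c i)⟩) *
              (2 * ((Finset.univ.sup fun j => leafCount (c j) : ℕ) : ℝ) - 1) := by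
        intro i
        refine le_trans (ih i (hns.2 i) _ (hf.2 i) (fun p => hx _)) ?_
        refine mul_le_mul_of_nonneg_left ?_ (hx _)
        have : (leafCount (c i) : ℝ) ≤ ((Finset.univ.sup fun j => leafCount (c j) : ℕ) : ℝ) := by
          exact Nat.cast_le.mpr (Finset.le_sup (f := fun j => leafCount (c j)) (Finset.mem_univ i))
        linarith
      calc ∑ i, obsSum (c i) (fun p => x (Sum.inr ⟨i, p⟩))
          ≤ ∑ i, x (Sum.inr ⟨i, root (c i)⟩) *
              (2 * ((Finset.univ.sup fun j => leafCount (c j) : ℕ) : ℝ) - 1) :=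
            Finset.sum_le_sum fun i _ => key i
        _ = x (Sum.inl ()) * (2 * ((Finset.univ.sup fun j => leafCount (c j) : ℕ) : ℝ) - 1) := by
            rw [← Finset.sum_mul, ← hf.1]
    | false =>
      cases k with
      | zero =>
        simp only [obsSum, root, leafCount]
        norm_num
      | succ n =>
        have hn : 1 ≤ n := by
          have := hns.1 rfl; omega
        simp only [flowQ] at hf
        simp only [obsSum, root, leafCount]
        have key : ∀ i : Fin (n + 1),
            obsSum (c i) (fun p => x (Sum.inr ⟨i, p⟩)) ≤
              x (Sum.inl ()) * (2 * (leafCount (c i) : ℝ) - 1) := by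
          intro i
          have := ih i (hns.2 i) _ (hf.2 i) (fun p => hx _)
          rwa [hf.1 i] at this
        have hsum : ∑ i, obsSum (c i) (fun p => x (Sum.inr ⟨i, p⟩)) ≤
            x (Sum.inl ()) * (2 * (∑ i, (leafCount (c i) : ℝ)) - (n + 1)) := by
          calc ∑ i, obsSum (c i) (fun p => x (Sum.inr ⟨i, p⟩))
              ≤ ∑ i, x (Sum.inl ()) * (2 * (leafCount (c i) : ℝ) - 1) :=
                Finset.sum_le_sum fun i _ => key i
            _ = x (Sum.inl ()) * (2 * (∑ i, (leafCount (c i) : ℝ)) - (n + 1)) := by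
                rw [← Finset.mul_sum]
                congr 1
                rw [Finset.sum_sub_distrib, ← Finset.mul_sum]
                simp
        have hx0 := hx (Sum.inl () : Pts (GTree.node false (n + 1) c))
        have hcast : ((∑ i, leafCount (c i) : ℕ) : ℝ) = ∑ i, (leafCount (c i) : ℝ) := by
          push_cast; ring
        rw [hcast]
        have hn' : (1 : ℝ) ≤ n := by exact_mod_cast hn
        nlinarith [hsum, hx0, mul_nonneg hx0 (by linarith : (0:ℝ) ≤ (n:ℝ) - 1)]

open GTree in
/-- In a TFSDP in which every non-root non-terminal observation point has at
least two children, the tree size is at most twice the leaf count: `‖Q‖₁ ≤ 2 ‖Q‖_⊥`.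
More precisely, for every subtree rooted at a non-root point `h` (so that every observation
point of the subtree, including its root, has `≠ 1` children) and every nonnegative vector `x`
satisfying the sequence-form flow constraints there,
`∑_{σ ∈ Σ_h} x[σ] ≤ x[h] * (2 w(h) - 1)`. -/
theorem stmt13 :
    (∀ t : GTree, noSingle t → ∀ x : Pts t → ℝ, flowQ t x → (∀ p, 0 ≤ x p) →
      obsSum t x ≤ x (root t) * (2 * (leafCount t : ℝ) - 1)) ∧
    (∀ (k : ℕ) (c : Fin k → GTree), (∀ i, noSingle (c i)) →
      ∀ x : Pts (.node false k c) → ℝ, memQ (.node false k c) x →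
        obsSum (.node false k c) x ≤ 2 * (leafCount (.node false k c) : ℝ)) := by
  refine ⟨stmt13_aux, ?_⟩
  intro k c hns x hx
  obtain ⟨hf, hr, hicc⟩ := hx
  simp only [flowQ] at hf
  simp only [root] at hr
  simp only [obsSum]
  have key : ∀ i : Fin k,
      obsSum (c i) (fun p => x (Sum.inr ⟨i, p⟩)) ≤ 2 * (leafCount (c i) : ℝ) - 1 := by
    intro i
    have := stmt13_aux (c i) (hns i) _ (hf.2 i) (fun p => (hicc _).1)
    rw [hf.1 i, hr, one_mul] at this
    exact this
  cases k with
  | zero => simp [hr, leafCount]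
  | succ n =>
    have hsum : ∑ i, obsSum (c i) (fun p => x (Sum.inr ⟨i, p⟩)) ≤
        2 * (∑ i, (leafCount (c i) : ℝ)) - (n + 1) := by
      calc ∑ i, obsSum (c i) (fun p => x (Sum.inr ⟨i, p⟩))
          ≤ ∑ i, (2 * (leafCount (c i) : ℝ) - 1) := Finset.sum_le_sum fun i _ => key i
        _ = 2 * (∑ i, (leafCount (c i) : ℝ)) - (n + 1) := by
            rw [Finset.sum_sub_distrib, ← Finset.mul_sum]; simp
    simp only [leafCount]
    have hcast : ((∑ i, leafCount (c i) : ℕ) : ℝ) = ∑ i, (leafCount (c i) : ℝ) := by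
      push_cast; ring
    rw [hcast, hr]
    have : (1 : ℝ) ≤ n + 1 := by
      have : (0:ℝ) ≤ n := Nat.cast_nonneg n
      linarith
    linarith
end

section
/- Duality of treeplex norms: for a TFSDP with strategy polytope Q and kernel polytope Y over terminals E, the norms ‖u‖_{Δ,1} = sup_{y∈Y}⟨|u|,y⟩ and ‖u‖_{Δ,∞} = sup_{x∈Q}⟨|u|,x⟩ are dual to each other: for all u ∈ ℝ^E, sup_{v ≠ 0} ⟨u,v⟩/‖v‖_{Δ,1} = ‖u‖_{Δ,∞}. -/
/-! Both treeplex norms have recursive descriptions: `‖u‖_{Δ,∞}` is a maximum over the actions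
at a decision point and a sum over the children at an observation point, `‖v‖_{Δ,1}` the other
way round, and each supremum is attained at a greedily built vertex of `Q` resp. `Y`. This swap
of sum and max gives, by induction, the Hölder inequality `⟨u, v⟩ ≤ ‖u‖_{Δ,∞} ‖v‖_{Δ,1}`, while
for `x ∈ Q`, `y ∈ Y` the leaf product `⟨x, y⟩` telescopes to `x[∅] y[∅] = 1`, so that
`‖x‖_{Δ,1} = 1` on `Q`. Taking `x ∈ Q` attaining `‖u‖_{Δ,∞}` and `v = sign(u) · x` shows that
the Hölder bound is attained. -/

theorem Fintype.sum_apply_pi_single {ι M : Type*} [Fintype ι] [DecidableEq ι] [AddCommMonoid M]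
    {β : ι → Type*} [∀ i, Zero (β i)] (F : ∀ i, β i → M) (hF : ∀ i, F i 0 = 0) (i₀ : ι)
    (x : β i₀) :
    ∑ i, F i (Pi.single i₀ x i) = F i₀ x := by
  rw [Finset.sum_eq_single i₀ (fun i _ hi => by rw [Pi.single_eq_of_ne hi, hF])
    (fun h => absurd (Finset.mem_univ i₀) h), Pi.single_eq_same]

theorem Pi.forall_apply_single {ι : Type*} [DecidableEq ι] {β : ι → Type*} [∀ i, Zero (β i)]
    {P : ∀ i, β i → Prop} (hP : ∀ i, P i 0) {i₀ : ι} {x : β i₀} (hx : P i₀ x) :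
    ∀ i, P i (Pi.single i₀ x i) := by
  intro i
  rcases eq_or_ne i i₀ with rfl | hi
  · rwa [Pi.single_eq_same]
  · rw [Pi.single_eq_of_ne hi]
    exact hP i

namespace GTree

variable {b : Bool} {k : ℕ} {c : Fin k → GTree}

noncomputable def leafDot (t : GTree) (f g : Pts t → ℝ) : ℝ :=
  ∑ p : Pts t, if isLeaf t p then f p * g p else 0

theorem leafDot_node (f g : Pts (.node b k c) → ℝ) :
    leafDot (.node b k c) f g =
      (if (!b && k == 0) then f (Sum.inl ()) * g (Sum.inl ()) else 0) +
        ∑ i, leafDot (c i) (fun p => f (Sum.inr ⟨i, p⟩)) (fun p => g (Sum.inr ⟨i, p⟩)) := by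
  unfold leafDot
  exact (Fintype.sum_sum_type _).trans
    (congrArg₂ (· + ·) (Fintype.sum_unique _) (Fintype.sum_sigma _))

theorem leafDot_leaf {c : Fin 0 → GTree} (f g : Pts (.node false 0 c) → ℝ) :
    leafDot (.node false 0 c) f g = f (Sum.inl ()) * g (Sum.inl ()) := by
  simp [leafDot_node]

theorem leafDot_node_of_not_leaf (h : (!b && k == 0) = false) (f g : Pts (.node b k c) → ℝ) :
    leafDot (.node b k c) f g =
      ∑ i, leafDot (c i) (fun p => f (Sum.inr ⟨i, p⟩)) (fun p => g (Sum.inr ⟨i, p⟩)) := by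
  rw [leafDot_node, h, if_neg Bool.false_ne_true, zero_add]

theorem leafDot_comm (t : GTree) (f g : Pts t → ℝ) : leafDot t f g = leafDot t g f := by
  simp only [leafDot, mul_comm]

theorem leafDot_zero_right (t : GTree) (f : Pts t → ℝ) : leafDot t f 0 = 0 := by
  simp [leafDot]

theorem exists_isLeaf_ne_zero_of_leafDot_ne_zero {t : GTree} {f g : Pts t → ℝ}
    (h : leafDot t f g ≠ 0) : ∃ p, isLeaf t p ∧ f p ≠ 0 := by
  obtain ⟨p, -, hp⟩ := Finset.exists_ne_zero_of_sum_ne_zero h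
  by_cases hl : isLeaf t p
  · exact ⟨p, hl, left_ne_zero_of_mul (by simpa [hl] using hp)⟩
  · simp [hl] at hp

theorem leafDot_eq_mul_of_flowQ_of_flowY : ∀ (t : GTree) (x y : Pts t → ℝ),
    flowQ t x → flowY t y → leafDot t x y = x (root t) * y (root t)
  | .node true k c, x, y, ⟨hx, hxc⟩, ⟨hy, hyc⟩ => by
    rw [leafDot_node_of_not_leaf rfl, root, hx, Finset.sum_mul]
    refine Finset.sum_congr rfl fun i _ => ?_
    rw [leafDot_eq_mul_of_flowQ_of_flowY (c i) _ _ (hxc i) (hyc i), hy i]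
  | .node false 0 c, x, y, _, _ => leafDot_leaf x y
  | .node false (n + 1) c, x, y, ⟨hx, hxc⟩, ⟨hy, hyc⟩ => by
    rw [leafDot_node_of_not_leaf rfl, root, hy n.succ_ne_zero, Finset.mul_sum]
    refine Finset.sum_congr rfl fun i _ => ?_
    rw [leafDot_eq_mul_of_flowQ_of_flowY (c i) _ _ (hxc i) (hyc i), hx i]

/-- The treeplex norms `‖·‖_{Δ,∞}` and `‖·‖_{Δ,1}` in recursive form. -/
noncomputable def normInf : (t : GTree) → (Pts t → ℝ) → ℝ
  | .node true _ c, u => ⨆ i, normInf (c i) (fun p => u (Sum.inr ⟨i, p⟩))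
  | .node false 0 _, u => |u (Sum.inl ())|
  | .node false (_ + 1) c, u => ∑ i, normInf (c i) (fun p => u (Sum.inr ⟨i, p⟩))

noncomputable def normOne : (t : GTree) → (Pts t → ℝ) → ℝ
  | .node true _ c, v => ∑ i, normOne (c i) (fun p => v (Sum.inr ⟨i, p⟩))
  | .node false 0 _, v => |v (Sum.inl ())|
  | .node false (_ + 1) c, v => ⨆ i, normOne (c i) (fun p => v (Sum.inr ⟨i, p⟩))

theorem normInf_nonneg : ∀ (t : GTree) (u : Pts t → ℝ), 0 ≤ normInf t u
  | .node true _ c, _ => Real.iSup_nonneg fun i => normInf_nonneg (c i) _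
  | .node false 0 _, _ => abs_nonneg _
  | .node false (_ + 1) c, _ => Finset.sum_nonneg fun i _ => normInf_nonneg (c i) _

theorem normOne_nonneg : ∀ (t : GTree) (v : Pts t → ℝ), 0 ≤ normOne t v
  | .node true _ c, _ => Finset.sum_nonneg fun i _ => normOne_nonneg (c i) _
  | .node false 0 _, _ => abs_nonneg _
  | .node false (_ + 1) c, _ => Real.iSup_nonneg fun i => normOne_nonneg (c i) _

theorem normInf_abs : ∀ (t : GTree) (u : Pts t → ℝ), normInf t (fun p => |u p|) = normInf t u
  | .node true _ c, u => by simp only [normInf, normInf_abs]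
  | .node false 0 _, u => abs_abs _
  | .node false (_ + 1) c, u => by simp only [normInf, normInf_abs]

theorem normOne_abs : ∀ (t : GTree) (v : Pts t → ℝ), normOne t (fun p => |v p|) = normOne t v
  | .node true _ c, v => by simp only [normOne, normOne_abs]
  | .node false 0 _, v => abs_abs _
  | .node false (_ + 1) c, v => by simp only [normOne, normOne_abs]

theorem leafDot_le_normInf_mul_normOne : ∀ (t : GTree) (u v : Pts t → ℝ),
    leafDot t u v ≤ normInf t u * normOne t v
  | .node true k c, u, v => by
    rw [leafDot_node_of_not_leaf rfl, normInf, normOne, Finset.mul_sum]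
    refine Finset.sum_le_sum fun i _ => (leafDot_le_normInf_mul_normOne (c i) _ _).trans ?_
    exact mul_le_mul_of_nonneg_right
      (le_ciSup (f := fun j => normInf (c j) fun p => u (Sum.inr ⟨j, p⟩))
        (Finite.bddAbove_range _) i) (normOne_nonneg _ _)
  | .node false 0 c, u, v => by
    rw [leafDot_leaf, normInf, normOne, ← abs_mul]
    exact le_abs_self _
  | .node false (n + 1) c, u, v => by
    rw [leafDot_node_of_not_leaf rfl, normInf, normOne, Finset.sum_mul]
    refine Finset.sum_le_sum fun i _ => (leafDot_le_normInf_mul_normOne (c i) _ _).trans ?_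
    exact mul_le_mul_of_nonneg_left
      (le_ciSup (f := fun j => normOne (c j) fun p => v (Sum.inr ⟨j, p⟩))
        (Finite.bddAbove_range _) i) (normInf_nonneg _ _)

theorem abs_le_normOne : ∀ (t : GTree) (v : Pts t → ℝ) (p : Pts t), isLeaf t p →
    |v p| ≤ normOne t v
  | .node false 0 _, v, .inl (), _ => le_of_eq (by rw [normOne])
  | .node true _ c, v, .inr ⟨i, q⟩, hp => by
    rw [normOne]
    exact (abs_le_normOne (c i) _ q hp).trans <|
      Finset.single_le_sum (f := fun j => normOne (c j) fun p => v (Sum.inr ⟨j, p⟩))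
        (fun j _ => normOne_nonneg (c j) _) (Finset.mem_univ i)
  | .node false (_ + 1) c, v, .inr ⟨i, q⟩, hp => by
    rw [normOne]
    exact (abs_le_normOne (c i) _ q hp).trans
      (le_ciSup (f := fun j => normOne (c j) fun p => v (Sum.inr ⟨j, p⟩))
        (Finite.bddAbove_range _) i)
  | .node true _ _, _, .inl (), hp | .node false (_ + 1) _, _, .inl (), hp => by simp [isLeaf] at hp

theorem flowQ_zero : ∀ t : GTree, flowQ t fun _ => 0
  | .node true _ c => ⟨by simp, fun i => flowQ_zero (c i)⟩
  | .node false _ c => ⟨fun _ => rfl, fun i => flowQ_zero (c i)⟩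

theorem flowY_zero : ∀ t : GTree, flowY t fun _ => 0
  | .node true _ c => ⟨fun _ => rfl, fun i => flowY_zero (c i)⟩
  | .node false _ c => ⟨fun _ => by simp, fun i => flowY_zero (c i)⟩

def glue (X : ∀ i, Pts (c i) → ℝ) : Pts (.node b k c) → ℝ :=
  Sum.elim (fun _ => 1) fun q => X q.1 q.2

theorem glue_mem_Icc {X : ∀ i, Pts (c i) → ℝ} (hX : ∀ i q, X i q ∈ Set.Icc (0 : ℝ) 1) :
    ∀ p, glue (b := b) X p ∈ Set.Icc (0 : ℝ) 1
  | .inl _ => ⟨zero_le_one, le_rfl⟩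
  | .inr ⟨i, q⟩ => hX i q

def glueSingle (i₀ : Fin k) (x : Pts (c i₀) → ℝ) : Pts (.node b k c) → ℝ :=
  glue (Pi.single (M := fun i => Pts (c i) → ℝ) i₀ x)

theorem glueSingle_mem_Icc {i₀ : Fin k} {x : Pts (c i₀) → ℝ}
    (hx : ∀ q, x q ∈ Set.Icc (0 : ℝ) 1) : ∀ p, glueSingle (b := b) i₀ x p ∈ Set.Icc (0 : ℝ) 1 :=
  glue_mem_Icc <|
    Pi.forall_apply_single (P := fun i (z : Pts (c i) → ℝ) => ∀ q, z q ∈ Set.Icc (0 : ℝ) 1)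
      (fun _ _ => ⟨le_rfl, zero_le_one⟩) hx

theorem sum_glueSingle_root (i₀ : Fin k) (x : Pts (c i₀) → ℝ) :
    ∑ i, glueSingle (b := b) i₀ x (Sum.inr ⟨i, root (c i)⟩) = x (root (c i₀)) :=
  Fintype.sum_apply_pi_single (fun i (z : Pts (c i) → ℝ) => z (root (c i))) (fun _ => rfl) i₀ x

theorem memQ_glue_of_obs {X : ∀ i, Pts (c i) → ℝ} (hX : ∀ i, memQ (c i) (X i)) :
    memQ (.node false k c) (glue X) :=
  ⟨⟨fun i => (hX i).2.1, fun i => (hX i).1⟩, rfl, glue_mem_Icc fun i => (hX i).2.2⟩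

theorem memQ_glueSingle_of_dec (i₀ : Fin k) {x : Pts (c i₀) → ℝ} (hx : memQ (c i₀) x) :
    memQ (.node true k c) (glueSingle i₀ x) :=
  ⟨⟨(sum_glueSingle_root i₀ x).trans hx.2.1 |>.symm,
      Pi.forall_apply_single (P := fun i => flowQ (c i)) (fun i => flowQ_zero (c i)) hx.1⟩,
    rfl, glueSingle_mem_Icc hx.2.2⟩

theorem memY_glue_of_dec {X : ∀ i, Pts (c i) → ℝ} (hX : ∀ i, memY (c i) (X i)) :
    memY (.node true k c) (glue X) :=
  ⟨⟨fun i => (hX i).2.1, fun i => (hX i).1⟩, rfl, glue_mem_Icc fun i => (hX i).2.2⟩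

theorem memY_glueSingle_of_obs (i₀ : Fin k) {y : Pts (c i₀) → ℝ} (hy : memY (c i₀) y) :
    memY (.node false k c) (glueSingle i₀ y) :=
  ⟨⟨fun _ => (sum_glueSingle_root i₀ y).trans hy.2.1 |>.symm,
      Pi.forall_apply_single (P := fun i => flowY (c i)) (fun i => flowY_zero (c i)) hy.1⟩,
    rfl, glueSingle_mem_Icc hy.2.2⟩

theorem memY_glue_of_leaf {c : Fin 0 → GTree} (X : ∀ i, Pts (c i) → ℝ) :
    memY (.node false 0 c) (glue X) :=
  ⟨⟨fun h => absurd rfl h, finZeroElim⟩, rfl, glue_mem_Icc finZeroElim⟩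

theorem sum_leafDot_glueSingle (i₀ : Fin k) (f : Pts (.node b k c) → ℝ) (x : Pts (c i₀) → ℝ) :
    ∑ i, leafDot (c i) (fun p => f (Sum.inr ⟨i, p⟩))
      (fun p => glueSingle (b := b) i₀ x (Sum.inr ⟨i, p⟩)) =
      leafDot (c i₀) (fun p => f (Sum.inr ⟨i₀, p⟩)) x :=
  Fintype.sum_apply_pi_single (fun i z => leafDot (c i) (fun p => f (Sum.inr ⟨i, p⟩)) z)
    (fun _ => leafDot_zero_right _ _) i₀ x

/-- The greedy vertex of `Q`: an argmax action at decision points, all children at observation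
points. -/
theorem exists_memQ_leafDot_abs_eq_normInf : ∀ t : GTree, wf t → ∀ u : Pts t → ℝ,
    ∃ x, memQ t x ∧ leafDot t (fun p => |u p|) x = normInf t u
  | .node true k c, ⟨hk, hwf⟩, u => by
    have : Nonempty (Fin k) := ⟨⟨0, hk rfl⟩⟩
    obtain ⟨i₀, hi₀⟩ :=
      exists_eq_ciSup_of_finite (f := fun i => normInf (c i) fun p => u (Sum.inr ⟨i, p⟩))
    obtain ⟨x, hx, hxu⟩ :=
      exists_memQ_leafDot_abs_eq_normInf (c i₀) (hwf i₀) fun p => u (Sum.inr ⟨i₀, p⟩)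
    refine ⟨glueSingle i₀ x, memQ_glueSingle_of_dec i₀ hx, ?_⟩
    rw [leafDot_node_of_not_leaf rfl, normInf, ← hi₀, ← hxu]
    exact sum_leafDot_glueSingle i₀ (fun p => |u p|) x
  | .node false 0 c, _, u =>
    ⟨glue finZeroElim, memQ_glue_of_obs finZeroElim, by
      rw [leafDot_leaf, normInf]; exact mul_one _⟩
  | .node false (n + 1) c, ⟨_, hwf⟩, u => by
    choose X hX hXu using fun i =>
      exists_memQ_leafDot_abs_eq_normInf (c i) (hwf i) fun p => u (Sum.inr ⟨i, p⟩)
    refine ⟨glue X, memQ_glue_of_obs hX, ?_⟩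
    rw [leafDot_node_of_not_leaf rfl, normInf]
    exact Finset.sum_congr rfl fun i _ => hXu i

theorem exists_memY_leafDot_abs_eq_normOne : ∀ (t : GTree) (v : Pts t → ℝ),
    ∃ y, memY t y ∧ leafDot t (fun p => |v p|) y = normOne t v
  | .node true k c, v => by
    choose Y hY hYv using fun i =>
      exists_memY_leafDot_abs_eq_normOne (c i) fun p => v (Sum.inr ⟨i, p⟩)
    refine ⟨glue Y, memY_glue_of_dec hY, ?_⟩
    rw [leafDot_node_of_not_leaf rfl, normOne]
    exact Finset.sum_congr rfl fun i _ => hYv i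
  | .node false 0 c, v =>
    ⟨glue finZeroElim, memY_glue_of_leaf _, by rw [leafDot_leaf, normOne]; exact mul_one _⟩
  | .node false (n + 1) c, v => by
    obtain ⟨i₀, hi₀⟩ :=
      exists_eq_ciSup_of_finite (f := fun i => normOne (c i) fun p => v (Sum.inr ⟨i, p⟩))
    obtain ⟨y, hy, hyv⟩ := exists_memY_leafDot_abs_eq_normOne (c i₀) fun p => v (Sum.inr ⟨i₀, p⟩)
    refine ⟨glueSingle i₀ y, memY_glueSingle_of_obs i₀ hy, ?_⟩
    rw [leafDot_node_of_not_leaf rfl, normOne, ← hi₀, ← hyv]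
    exact sum_leafDot_glueSingle i₀ (fun p => |v p|) y

theorem normOne_eq_one_of_memQ {t : GTree} {x : Pts t → ℝ} (hx : memQ t x) :
    normOne t x = 1 := by
  obtain ⟨y, hy, hxy⟩ := exists_memY_leafDot_abs_eq_normOne t x
  have habs : (fun p => |x p|) = x := funext fun p => abs_of_nonneg (hx.2.2 p).1
  rw [← hxy, habs, leafDot_eq_mul_of_flowQ_of_flowY t x y hx.1 hy.1, hx.2.1, hy.2.1, one_mul]

theorem normInf_eq_one_of_memY {t : GTree} (hwf : wf t) {y : Pts t → ℝ} (hy : memY t y) :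
    normInf t y = 1 := by
  obtain ⟨x, hx, hyx⟩ := exists_memQ_leafDot_abs_eq_normInf t hwf y
  have habs : (fun p => |y p|) = y := funext fun p => abs_of_nonneg (hy.2.2 p).1
  rw [← hyx, habs, leafDot_comm, leafDot_eq_mul_of_flowQ_of_flowY t x y hx.1 hy.1, hx.2.1,
    hy.2.1, one_mul]

theorem isGreatest_leafDot_abs_memQ {t : GTree} (hwf : wf t) (u : Pts t → ℝ) :
    IsGreatest (leafDot t (fun p => |u p|) '' {x | memQ t x}) (normInf t u) := by
  obtain ⟨x, hx, hxu⟩ := exists_memQ_leafDot_abs_eq_normInf t hwf u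
  refine ⟨⟨x, hx, hxu⟩, ?_⟩
  rintro _ ⟨x', hx', rfl⟩
  calc leafDot t (fun p => |u p|) x' ≤ normInf t (fun p => |u p|) * normOne t x' :=
        leafDot_le_normInf_mul_normOne t _ x'
    _ = normInf t u := by rw [normInf_abs, normOne_eq_one_of_memQ hx', mul_one]

theorem isGreatest_leafDot_abs_memY {t : GTree} (hwf : wf t) (v : Pts t → ℝ) :
    IsGreatest (leafDot t (fun p => |v p|) '' {y | memY t y}) (normOne t v) := by
  obtain ⟨y, hy, hyv⟩ := exists_memY_leafDot_abs_eq_normOne t v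
  refine ⟨⟨y, hy, hyv⟩, ?_⟩
  rintro _ ⟨y', hy', rfl⟩
  calc leafDot t (fun p => |v p|) y' = leafDot t y' (fun p => |v p|) := leafDot_comm t _ _
    _ ≤ normInf t y' * normOne t (fun p => |v p|) := leafDot_le_normInf_mul_normOne t y' _
    _ = normOne t v := by rw [normOne_abs, normInf_eq_one_of_memY hwf hy', one_mul]

theorem isGreatest_leafDot_div_normOne {t : GTree} (hwf : wf t) (u : Pts t → ℝ) :
    IsGreatest ((fun v => leafDot t u v / normOne t v) '' {v | ∃ p, isLeaf t p ∧ v p ≠ 0})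
      (normInf t u) := by
  obtain ⟨x, hx, hxu⟩ := exists_memQ_leafDot_abs_eq_normInf t hwf u
  set v : Pts t → ℝ := fun p => if u p < 0 then -x p else x p
  have hv_abs : (fun p => |v p|) = x := funext fun p => by
    by_cases h : u p < 0 <;> simp [v, h, abs_of_nonneg (hx.2.2 p).1]
  have huv : leafDot t u v = normInf t u := by
    refine (Finset.sum_congr rfl fun p _ => ?_).trans hxu
    by_cases h : u p < 0
    · simp [v, h, abs_of_neg h]
    · simp [v, h, abs_of_nonneg (not_lt.mp h)]
  have hv_norm : normOne t v = 1 := by rw [← normOne_abs, hv_abs, normOne_eq_one_of_memQ hx]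
  refine ⟨⟨v, ?_, by simp [huv, hv_norm]⟩, ?_⟩
  · obtain ⟨y, -, hvy⟩ := exists_memY_leafDot_abs_eq_normOne t v
    obtain ⟨p, hp, hvp⟩ :=
      exists_isLeaf_ne_zero_of_leafDot_ne_zero (hvy.trans hv_norm ▸ one_ne_zero)
    exact ⟨p, hp, abs_ne_zero.mp hvp⟩
  · rintro _ ⟨w, ⟨p, hp, hwp⟩, rfl⟩
    have hw : 0 < normOne t w := (abs_pos.mpr hwp).trans_le (abs_le_normOne t w p hp)
    exact (div_le_iff₀ hw).mpr (leafDot_le_normInf_mul_normOne t u w)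

end GTree

open GTree in
/-- Duality of the treeplex norms: with
`‖u‖_{Δ,1} = sup_{y ∈ Y} ⟨|u|, y⟩` and `‖u‖_{Δ,∞} = sup_{x ∈ Q} ⟨|u|, x⟩` (inner products over
the terminal coordinates `E`), for every `u ∈ ℝ^E`,
`sup_{v ≠ 0} ⟨u, v⟩ / ‖v‖_{Δ,1} = ‖u‖_{Δ,∞}`. -/
theorem stmt16 (t : GTree) (hwf : wf t) (u : Pts t → ℝ) :
    let N1 : (Pts t → ℝ) → ℝ := fun v =>
      sSup ((fun y => ∑ p : Pts t, if isLeaf t p then |v p| * y p else 0) '' {y | memY t y})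
    let Ninf : (Pts t → ℝ) → ℝ := fun v =>
      sSup ((fun x => ∑ p : Pts t, if isLeaf t p then |v p| * x p else 0) '' {x | memQ t x})
    sSup ((fun v => (∑ p : Pts t, if isLeaf t p then u p * v p else 0) / N1 v)
        '' {v | ∃ p, isLeaf t p ∧ v p ≠ 0}) = Ninf u := by
  intro N1 Ninf
  have hN1 : N1 = normOne t := funext fun v => (isGreatest_leafDot_abs_memY hwf v).csSup_eq
  have hNinf : Ninf u = normInf t u := (isGreatest_leafDot_abs_memQ hwf u).csSup_eq
  rw [hN1, hNinf]
  exact (isGreatest_leafDot_div_normOne hwf u).csSup_eq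
end

section
/- Weighted dilated entropy collapses to weighted terminal entropy: for any transition kernel y ∈ Y and any strategy x ∈ Q (extended to all points of the tree), Σ_{j∈J} Σ_{a∈A_j} y[ja]·x[ja]·ln(x[ja]/x[p_j]) = Σ_{σ∈E} y[σ]·x[σ]·ln x[σ], where p_j is the parent sequence of decision point j. -/
namespace GTree

lemma sum_pts {b : Bool} {k : ℕ} (c : Fin k → GTree) (f : Pts (.node b k c) → ℝ) :
    ∑ p : Pts (.node b k c), f p
      = f (Sum.inl ()) + ∑ i, ∑ q : Pts (c i), f (Sum.inr ⟨i, q⟩) := by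
  have h : ∀ (g : (Unit ⊕ ((i : Fin k) × Pts (c i))) → ℝ),
      ∑ p, g p = g (Sum.inl ()) + ∑ i, ∑ q : Pts (c i), g (Sum.inr ⟨i, q⟩) := by
    intro g
    rw [Fintype.sum_sum_type]
    simp [Finset.sum_sigma']
  exact h f

lemma term_helper (a b : ℝ) (ha : 0 ≤ a) (hab : a ≠ 0 → 0 < b) :
    a * Real.log (a / b) = a * Real.log a - a * Real.log b := by
  rcases eq_or_ne a 0 with h | h
  · simp [h]
  · rw [Real.log_div h (ne_of_gt (hab h))]; ring

lemma key : ∀ (t : GTree) (x y : Pts t → ℝ), flowQ t x → flowY t y →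
    (∀ p, 0 ≤ x p) →
    dilEnt t x y
      = (∑ p : Pts t, if isLeaf t p then y p * x p * Real.log (x p) else 0)
        - y (root t) * x (root t) * Real.log (x (root t)) := by
  intro t
  induction t with
  | node isDec k c ih =>
    intro x y hx hy hpos
    cases isDec with
    | true =>
      obtain ⟨hx0, hxc⟩ := hx
      obtain ⟨hy0, hyc⟩ := hy
      rw [show dilEnt (.node true k c) x y
          = ∑ i, (y (Sum.inr ⟨i, root (c i)⟩) * x (Sum.inr ⟨i, root (c i)⟩) *
              Real.log (x (Sum.inr ⟨i, root (c i)⟩) / x (Sum.inl ())) +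
            dilEnt (c i) (fun p => x (Sum.inr ⟨i, p⟩)) (fun p => y (Sum.inr ⟨i, p⟩)))
          from rfl,
        sum_pts c (fun p => if isLeaf (.node true k c) p
          then y p * x p * Real.log (x p) else 0)]
      have hrs : isLeaf (.node true k c) (Sum.inl ()) = false := rfl
      have hrl : ∀ (i : Fin k) (q : Pts (c i)),
          isLeaf (.node true k c) (Sum.inr ⟨i, q⟩) = isLeaf (c i) q := fun _ _ => rfl
      simp only [hrs, hrl, Bool.false_eq_true, if_false]
      have hlog : ∀ i, x (Sum.inr ⟨i, root (c i)⟩) *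
          Real.log (x (Sum.inr ⟨i, root (c i)⟩) / x (Sum.inl ()))
          = x (Sum.inr ⟨i, root (c i)⟩) * Real.log (x (Sum.inr ⟨i, root (c i)⟩))
            - x (Sum.inr ⟨i, root (c i)⟩) * Real.log (x (Sum.inl ())) := by
        intro i
        refine term_helper _ _ (hpos _) ?_
        intro hne
        have h1 := (hpos (Sum.inr ⟨i, root (c i)⟩)).lt_of_ne' hne
        have h2 : x (Sum.inr ⟨i, root (c i)⟩) ≤ x (Sum.inl ()) := by
          rw [hx0]
          exact Finset.single_le_sum (f := fun j => x (Sum.inr ⟨j, root (c j)⟩))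
            (fun j _ => hpos _) (Finset.mem_univ i)
        linarith
      have step : ∀ i, y (Sum.inr ⟨i, root (c i)⟩) * x (Sum.inr ⟨i, root (c i)⟩) *
            Real.log (x (Sum.inr ⟨i, root (c i)⟩) / x (Sum.inl ()))
          + dilEnt (c i) (fun p => x (Sum.inr ⟨i, p⟩)) (fun p => y (Sum.inr ⟨i, p⟩))
          = (∑ q : Pts (c i), if isLeaf (c i) q
              then y (Sum.inr ⟨i, q⟩) * x (Sum.inr ⟨i, q⟩) *
                Real.log (x (Sum.inr ⟨i, q⟩)) else 0)
            - y (Sum.inl ()) * x (Sum.inr ⟨i, root (c i)⟩) * Real.log (x (Sum.inl ())) := by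
        intro i
        rw [ih i _ _ (hxc i) (hyc i) (fun p => hpos _), hy0 i]
        linear_combination y (Sum.inl ()) * hlog i
      rw [Finset.sum_congr rfl (fun i _ => step i), Finset.sum_sub_distrib]
      have hlast : ∑ i, y (Sum.inl ()) * x (Sum.inr ⟨i, root (c i)⟩) * Real.log (x (Sum.inl ()))
          = y (Sum.inl ()) * x (Sum.inl ()) * Real.log (x (Sum.inl ())) := by
        rw [hx0, Finset.mul_sum, Finset.sum_mul]
      rw [hlast, show root (GTree.node true k c) = Sum.inl () from rfl, zero_add]
    | false =>
      obtain ⟨hx0, hxc⟩ := hx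
      obtain ⟨hy0, hyc⟩ := hy
      rw [show dilEnt (.node false k c) x y
          = ∑ i, dilEnt (c i) (fun p => x (Sum.inr ⟨i, p⟩)) (fun p => y (Sum.inr ⟨i, p⟩))
          from rfl,
        sum_pts c (fun p => if isLeaf (.node false k c) p
          then y p * x p * Real.log (x p) else 0)]
      have hrl : ∀ (i : Fin k) (q : Pts (c i)),
          isLeaf (.node false k c) (Sum.inr ⟨i, q⟩) = isLeaf (c i) q := fun _ _ => rfl
      have step : ∀ i, dilEnt (c i) (fun p => x (Sum.inr ⟨i, p⟩)) (fun p => y (Sum.inr ⟨i, p⟩))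
          = (∑ q : Pts (c i), if isLeaf (c i) q
              then y (Sum.inr ⟨i, q⟩) * x (Sum.inr ⟨i, q⟩) *
                Real.log (x (Sum.inr ⟨i, q⟩)) else 0)
            - y (Sum.inr ⟨i, root (c i)⟩) * x (Sum.inl ()) * Real.log (x (Sum.inl ())) := by
        intro i
        rw [ih i _ _ (hxc i) (hyc i) (fun p => hpos _), hx0 i]
      rw [Finset.sum_congr rfl (fun i _ => step i), Finset.sum_sub_distrib]
      simp only [hrl]
      rcases Nat.eq_zero_or_pos k with hk | hk
      · subst hk
        have hrs : isLeaf (.node false 0 c) (Sum.inl ()) = true := rfl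
        rw [show root (GTree.node false 0 c) = Sum.inl () from rfl]
        simp [hrs]
      · have hkne : k ≠ 0 := Nat.pos_iff_ne_zero.mp hk
        have hrs : isLeaf (.node false k c) (Sum.inl ()) = false := by
          simp only [isLeaf, Bool.not_false, Bool.true_and]
          simpa using hkne
        rw [hrs]
        simp only [Bool.false_eq_true, if_false]
        have hlast : ∑ i, y (Sum.inr ⟨i, root (c i)⟩) * x (Sum.inl ()) * Real.log (x (Sum.inl ()))
            = y (Sum.inl ()) * x (Sum.inl ()) * Real.log (x (Sum.inl ())) := by
          rw [hy0 hkne, Finset.sum_mul, Finset.sum_mul]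
        rw [hlast, show root (GTree.node false k c) = Sum.inl () from rfl, zero_add]

end GTree

open GTree in
/-- Weighted dilated entropy collapses to the weighted terminal entropy: for any
transition kernel `y ∈ Y` and any (extended sequence-form) strategy `x ∈ Q`,
`∑_{j ∈ J} ∑_{a ∈ A_j} y[ja] * x[ja] * ln (x[ja] / x[p_j]) = ∑_{σ ∈ E} y[σ] * x[σ] * ln x[σ]`. -/
theorem stmt17 (t : GTree) (x y : Pts t → ℝ) (hx : memQ t x) (hy : memY t y) :
    dilEnt t x y = ∑ p : Pts t, if isLeaf t p then y p * x p * Real.log (x p) else 0 := by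
  obtain ⟨hxf, hx1, hxI⟩ := hx
  obtain ⟨hyf, hy1, hyI⟩ := hy
  rw [key t x y hxf hyf (fun p => (hxI p).1), hx1]
  simp
end

section
/- Diameter bound for weight-one dilated entropy: the weight-one dilated entropy φ₁(x) = Σ_{j∈J} Σ_{a∈A_j} x[ja]·ln(x[ja]/x[p_j]) satisfies −ln|V| ≤ φ₁(x) ≤ 0 for every x ∈ Q, where |V| is the number of vertices (reduced normal-form strategies) of Q. Consequently, with x₁ = argmin_{x∈Q} φ₁(x), the Bregman divergence satisfies D_{φ₁}(x*, x₁) ≤ ln|V| for all x* ∈ Q. -/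
/-! At a decision point the strategy counts of the actions add up, so the Gibbs inequality
`∑ xᵢ log (xᵢ / r) ≥ ∑ xᵢ log qᵢ - r log ∑ qᵢ` (with `r = ∑ xᵢ`) lets the bound
`-x[j] ln |V_j|` pass from the children to the parent; at an observation point the counts
multiply and the logarithms add. The upper bound holds because `x[ja] ≤ x[j]`. The Bregman
bound is then the difference of the two bounds, the linear term being nonnegative by
first-order optimality. -/

namespace Real

theorem sub_le_mul_log_div {x m : ℝ} (hx : 0 ≤ x) (hm : 0 < m) : x - m ≤ x * log (x / m) := by
  have h := mul_nonneg hm.le (InformationTheory.klFun_nonneg (div_nonneg hx hm.le))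
  rw [InformationTheory.klFun_apply] at h
  have hm' : m ≠ 0 := hm.ne'
  have : m * (x / m * log (x / m) + 1 - x / m) = x * log (x / m) + m - x := by
    field_simp
  linarith

theorem mul_log_div_mul_div {x r q S : ℝ} (hr : 0 < r) (hq : 0 < q) (hS : 0 < S) :
    x * log (x / (q * r / S)) = x * log (x / r) - x * log q + x * log S := by
  rcases eq_or_ne x 0 with rfl | hx
  · simp
  rw [log_div hx (by positivity), log_div hx hr.ne', log_div (by positivity) hS.ne',
    log_mul hq.ne' hr.ne']
  ring

/-- Gibbs' inequality, in the form `KL(x / r ‖ q / ∑ q) ≥ 0` with `r = ∑ x`. -/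
theorem neg_mul_log_sum_le_sum_mul_log_div_sub {ι : Type*} (s : Finset ι) (x q : ι → ℝ)
    (hx : ∀ i ∈ s, 0 ≤ x i) (hq : ∀ i ∈ s, 0 < q i) :
    -((∑ i ∈ s, x i) * log (∑ i ∈ s, q i)) ≤
      ∑ i ∈ s, (x i * log (x i / ∑ j ∈ s, x j) - x i * log (q i)) := by
  set r := ∑ i ∈ s, x i
  rcases (Finset.sum_nonneg hx).eq_or_lt with hr | hr
  · have hx0 : ∀ i ∈ s, x i = 0 := (Finset.sum_eq_zero_iff_of_nonneg hx).mp hr.symm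
    have hterm : ∀ i ∈ s, x i * log (x i / r) - x i * log (q i) = 0 := fun i hi => by
      simp [hx0 i hi]
    rw [Finset.sum_eq_zero hterm, show r = 0 from hr.symm]
    simp
  set S := ∑ i ∈ s, q i
  have hS : 0 < S := Finset.sum_pos (fun i hi => hq i hi) (Finset.nonempty_of_sum_ne_zero hr.ne')
  have hm : ∑ i ∈ s, q i * r / S = r := by
    rw [← Finset.sum_div, ← Finset.sum_mul, mul_div_cancel_left₀ r hS.ne']
  have key : ∀ i ∈ s, x i - q i * r / S - x i * log S ≤
      x i * log (x i / r) - x i * log (q i) := fun i hi => by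
    have h := sub_le_mul_log_div (hx i hi) (show 0 < q i * r / S by have := hq i hi; positivity)
    rw [mul_log_div_mul_div hr (hq i hi) hS] at h
    linarith
  calc -(r * log S) = ∑ i ∈ s, (x i - q i * r / S - x i * log S) := by
        rw [Finset.sum_sub_distrib, Finset.sum_sub_distrib, hm, ← Finset.sum_mul]; ring
    _ ≤ _ := Finset.sum_le_sum key

end Real

namespace GTree

instance finite_strat : (t : GTree) → Finite (Strat t)
  | .node true k c =>
    haveI := fun i => finite_strat (c i)
    inferInstanceAs (Finite ((i : Fin k) × Strat (c i)))
  | .node false k c =>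
    haveI := fun i => finite_strat (c i)
    inferInstanceAs (Finite ((i : Fin k) → Strat (c i)))

theorem nonempty_strat : ∀ t : GTree, wf t → Nonempty (Strat t)
  | .node true _ c, ⟨hk, hwf⟩ =>
    have ⟨i⟩ := Fin.pos_iff_nonempty.mp (hk rfl)
    have ⟨s⟩ := nonempty_strat (c i) (hwf i)
    ⟨⟨i, s⟩⟩
  | .node false _ c, ⟨_, hwf⟩ => ⟨fun i => (nonempty_strat (c i) (hwf i)).some⟩

theorem card_strat_pos {t : GTree} (h : wf t) : 0 < Nat.card (Strat t) :=
  have := nonempty_strat t h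
  Nat.card_pos

theorem card_strat_dec {k : ℕ} (c : Fin k → GTree) :
    Nat.card (Strat (.node true k c)) = ∑ i, Nat.card (Strat (c i)) :=
  Nat.card_sigma

theorem card_strat_obs {k : ℕ} (c : Fin k → GTree) :
    Nat.card (Strat (.node false k c)) = ∏ i, Nat.card (Strat (c i)) :=
  Nat.card_pi

theorem dilEnt_one_nonpos :
    ∀ (t : GTree) (x : Pts t → ℝ), flowQ t x → (∀ p, 0 ≤ x p) → dilEnt t x (fun _ => 1) ≤ 0
  | .node true _ c, x, ⟨hsum, hflow⟩, hx => by
    refine Finset.sum_nonpos fun i _ => ?_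
    have hle : x (Sum.inr ⟨i, root (c i)⟩) ≤ x (Sum.inl ()) :=
      hsum ▸ Finset.single_le_sum (fun j _ => hx (Sum.inr ⟨j, root (c j)⟩))
        (Finset.mem_univ i)
    have hlog := Real.log_nonpos (div_nonneg (hx _) (hx _)) (div_le_one_of_le₀ hle (hx _))
    rw [one_mul]
    exact add_nonpos (mul_nonpos_of_nonneg_of_nonpos (hx _) hlog)
      (dilEnt_one_nonpos (c i) _ (hflow i) fun p => hx _)
  | .node false _ c, x, ⟨_, hflow⟩, hx =>
    Finset.sum_nonpos fun i _ => dilEnt_one_nonpos (c i) _ (hflow i) fun p => hx _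

theorem neg_mul_log_card_le_dilEnt_one : ∀ (t : GTree), wf t → ∀ x : Pts t → ℝ, flowQ t x →
    (∀ p, 0 ≤ x p) → -(x (root t) * Real.log (Nat.card (Strat t))) ≤ dilEnt t x (fun _ => 1)
  | .node true k c, ⟨_, hwf⟩, x, ⟨hsum, hflow⟩, hx => by
    have IH i := neg_mul_log_card_le_dilEnt_one (c i) (hwf i) _ (hflow i) fun p => hx _
    have hq i : (0 : ℝ) < Nat.card (Strat (c i)) := by exact_mod_cast card_strat_pos (hwf i)
    simp only [dilEnt, one_mul]
    calc -(x (Sum.inl ()) * Real.log (Nat.card (Strat (.node true k c))))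
        ≤ ∑ i, (x (Sum.inr ⟨i, root (c i)⟩) * Real.log (x (Sum.inr ⟨i, root (c i)⟩) /
              x (Sum.inl ())) -
            x (Sum.inr ⟨i, root (c i)⟩) * Real.log (Nat.card (Strat (c i)))) := by
          rw [card_strat_dec, Nat.cast_sum, hsum]
          exact Real.neg_mul_log_sum_le_sum_mul_log_div_sub _ _ _ (fun i _ => hx _) fun i _ => hq i
      _ ≤ _ := Finset.sum_le_sum fun i _ => by linarith [IH i]
  | .node false k c, ⟨_, hwf⟩, x, ⟨hroot, hflow⟩, hx => by
    have IH i := neg_mul_log_card_le_dilEnt_one (c i) (hwf i) _ (hflow i) fun p => hx _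
    have hq i : (Nat.card (Strat (c i)) : ℝ) ≠ 0 := by
      exact_mod_cast (card_strat_pos (hwf i)).ne'
    simp only [dilEnt]
    rw [card_strat_obs, Nat.cast_prod, Real.log_prod fun i _ => hq i, Finset.mul_sum,
      ← Finset.sum_neg_distrib]
    exact Finset.sum_le_sum fun i _ => hroot i ▸ IH i

theorem neg_log_card_le_dilEnt_one {t : GTree} (hwf : wf t) {x : Pts t → ℝ} (hx : memQ t x) :
    -Real.log (Nat.card (Strat t)) ≤ dilEnt t x (fun _ => 1) := by
  simpa [hx.2.1] using neg_mul_log_card_le_dilEnt_one t hwf x hx.1 fun p => (hx.2.2 p).1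

end GTree

open GTree in
/-- Diameter bound for the weight-one dilated entropy
`φ₁(x) = ∑_{j} ∑_{a} x[ja] ln (x[ja] / x[p_j])` (the weighted dilated entropy with all weights
equal to one): `-ln |V| ≤ φ₁(x) ≤ 0` for every `x ∈ Q`, where `|V|` is the number of reduced
normal-form strategies. Consequently, if `x₁` minimizes `φ₁` over `Q` and `g` is a gradient of
`φ₁` at `x₁` (in the terminal coordinates) satisfying the first-order optimality condition
`⟨g, x* - x₁⟩ ≥ 0` for all `x* ∈ Q`, then the Bregman divergence satisfies
`D_{φ₁}(x*, x₁) = φ₁(x*) - φ₁(x₁) - ⟨g, x* - x₁⟩ ≤ ln |V|`. -/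
theorem stmt18 (t : GTree) (hwf : wf t) :
    (∀ x : Pts t → ℝ, memQ t x →
      -Real.log (Nat.card (Strat t)) ≤ dilEnt t x (fun _ => 1) ∧
        dilEnt t x (fun _ => 1) ≤ 0) ∧
    (∀ x₁ xstar : Pts t → ℝ, memQ t x₁ → memQ t xstar →
      (∀ x, memQ t x → dilEnt t x₁ (fun _ => 1) ≤ dilEnt t x (fun _ => 1)) →
      ∀ g : Pts t → ℝ,
        (∀ x, memQ t x →
          0 ≤ ∑ p : Pts t, if isLeaf t p then g p * (x p - x₁ p) else 0) →
        dilEnt t xstar (fun _ => 1) - dilEnt t x₁ (fun _ => 1) -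
          (∑ p : Pts t, if isLeaf t p then g p * (xstar p - x₁ p) else 0)
          ≤ Real.log (Nat.card (Strat t))) := by
  refine ⟨fun x hx => ⟨neg_log_card_le_dilEnt_one hwf hx,
    dilEnt_one_nonpos t x hx.1 fun p => (hx.2.2 p).1⟩, ?_⟩
  intro x₁ xstar h₁ hstar _ g hg
  have hupper := dilEnt_one_nonpos t xstar hstar.1 fun p => (hstar.2.2 p).1
  have hlower := neg_log_card_le_dilEnt_one hwf h₁
  linarith [hg xstar hstar]
end
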